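/- arXiv:1512.01760 — 3 statements merged into one kernel-verified Lean document; each statement's English description precedes it below -/
import Mathlib

section
/- Let φ(z) = (i t / 2)·(z − z⁻¹)² − n·log z for parameters t > 0 and n ∈ ℝ with |n| < 2t. Then the critical points of φ on the unit circle (i.e., points where φ'(z) = 0) are exactly the four points S₁ = e^{−πi/4}·A, S₂ = e^{−πi/4}·Ā, S₃ = −S₁, S₄ = −S₂, where A = (1/2)·(√(2 + n/t) − i·√(2 − n/t)). -/
/-! Clearing denominators, `φ'(z) = 0` becomes `z⁴ + i (n/t) z² - 1 = 0`, a quadratic in `z²`.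
Since `S₁² = -i A²` and `S₂² = -i Ā²`, Vieta's formulas reduce
the claim to `A² + Ā² = n/t` and `|A|² = 1`, which hold because
`|n| < 2t` makes both radicands nonnegative. -/

open Complex

lemma quartic_eq_zero_iff {K : Type*} [CommRing K] [IsDomain K] (z a b : K) :
    z ^ 4 - (a ^ 2 + b ^ 2) * z ^ 2 + a ^ 2 * b ^ 2 = 0 ↔
      z = a ∨ z = b ∨ z = -a ∨ z = -b := by
  rw [show z ^ 4 - (a ^ 2 + b ^ 2) * z ^ 2 + a ^ 2 * b ^ 2 = (z - a) * (z - b) * (z + a) * (z + b)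
    by ring]
  simp only [mul_eq_zero, sub_eq_zero, add_eq_zero_iff_eq_neg, or_assoc]

lemma exp_neg_pi_mul_I_div_four_sq : exp (-(Real.pi : ℂ) * I / 4) ^ 2 = -I := by
  rw [sq, ← exp_add,
    show -(Real.pi : ℂ) * I / 4 + -(Real.pi : ℂ) * I / 4 = -((Real.pi : ℂ) / 2) * I by ring,
    exp_mul_I, cos_neg, sin_neg, cos_pi_div_two, sin_pi_div_two]
  ring

section HalfSum

variable (x y : ℝ)

lemma conj_half_sub_I_mul :
    starRingEnd ℂ ((1 / 2) * ((x : ℂ) - I * y)) = (1 / 2) * ((x : ℂ) + I * y) := by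
  simp only [map_mul, map_sub, map_div₀, map_one, map_ofNat, conj_I, conj_ofReal]
  ring

lemma half_sub_I_mul_sq_add_conj_sq :
    ((1 / 2) * ((x : ℂ) - I * y)) ^ 2 + ((1 / 2) * ((x : ℂ) + I * y)) ^ 2
      = (((x ^ 2 - y ^ 2) / 2 : ℝ) : ℂ) := by
  push_cast
  linear_combination (y : ℂ) ^ 2 / 2 * I_sq

lemma half_sub_I_mul_sq_mul_conj_sq :
    ((1 / 2) * ((x : ℂ) - I * y)) ^ 2 * ((1 / 2) * ((x : ℂ) + I * y)) ^ 2
      = (((x ^ 2 + y ^ 2) / 4 : ℝ) : ℂ) ^ 2 := by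
  push_cast
  linear_combination (-(y : ℂ) ^ 2 * (2 * x ^ 2 + (1 - I ^ 2) * y ^ 2) / 16) * I_sq

end HalfSum

lemma critical_eq_div {t n z : ℂ} (ht : t ≠ 0) (hz : z ≠ 0) :
    I * t * (z - z⁻¹) * (1 + z⁻¹ ^ 2) - n / z
      = I * t * (z ^ 4 + I * (n / t) * z ^ 2 - 1) / z ^ 3 := by
  field_simp
  linear_combination (-n * z ^ 2) * I_sq

theorem stmt7 (t n : ℝ) (ht : 0 < t) (hn : |n| < 2 * t)
    (A S1 S2 S3 S4 : ℂ)
    (hA : A = (1 / 2) * ((Real.sqrt (2 + n / t) : ℂ) - Complex.I * (Real.sqrt (2 - n / t) : ℂ)))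
    (hS1 : S1 = Complex.exp (-(Real.pi : ℂ) * Complex.I / 4) * A)
    (hS2 : S2 = Complex.exp (-(Real.pi : ℂ) * Complex.I / 4) * (starRingEnd ℂ A))
    (hS3 : S3 = -S1) (hS4 : S4 = -S2) :
    ∀ z : ℂ, ‖z‖ = 1 →
      (Complex.I * t * (z - z⁻¹) * (1 + (z⁻¹) ^ 2) - n / z = 0 ↔
        z = S1 ∨ z = S2 ∨ z = S3 ∨ z = S4) := by
  intro z hz
  have hz0 : z ≠ 0 := norm_ne_zero_iff.mp (hz ▸ one_ne_zero)
  have ht0 : (t : ℂ) ≠ 0 := ofReal_ne_zero.mpr ht.ne'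
  obtain ⟨hlo, hhi⟩ : -2 < n / t ∧ n / t < 2 := abs_lt.mp <| by
    rw [abs_div, abs_of_pos ht, div_lt_iff₀ ht]; exact hn
  have hx : Real.sqrt (2 + n / t) ^ 2 = 2 + n / t := Real.sq_sqrt (by linarith)
  have hy : Real.sqrt (2 - n / t) ^ 2 = 2 - n / t := Real.sq_sqrt (by linarith)
  have hS1sq : S1 ^ 2 = -I * A ^ 2 := by rw [hS1, mul_pow, exp_neg_pi_mul_I_div_four_sq]
  have hS2sq : S2 ^ 2 = -I * starRingEnd ℂ A ^ 2 := by
    rw [hS2, mul_pow, exp_neg_pi_mul_I_div_four_sq]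
  have hsum : S1 ^ 2 + S2 ^ 2 = -I * (n / t) := by
    rw [hS1sq, hS2sq, ← mul_add, hA, conj_half_sub_I_mul, half_sub_I_mul_sq_add_conj_sq, hx, hy]
    push_cast
    ring
  have hprod : S1 ^ 2 * S2 ^ 2 = -1 := by
    rw [hS1sq, hS2sq, hA, conj_half_sub_I_mul, mul_mul_mul_comm, half_sub_I_mul_sq_mul_conj_sq,
      hx, hy]
    push_cast
    linear_combination I_sq
  have hquartic : z ^ 4 + I * (n / t) * z ^ 2 - 1
      = z ^ 4 - (S1 ^ 2 + S2 ^ 2) * z ^ 2 + S1 ^ 2 * S2 ^ 2 := by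
    rw [hsum, hprod]; ring
  rw [critical_eq_div ht0 hz0, div_eq_zero_iff, or_iff_left (pow_ne_zero 3 hz0), mul_eq_zero,
    or_iff_right (mul_ne_zero I_ne_zero ht0), hquartic, quartic_eq_zero_iff, hS3, hS4]
end

section
/- Let δ : ℂ \ (unit circle) → ℂ be defined by δ(z) = exp( (−1/(2πi)) · [∫_{arc(S₁S₂)} + ∫_{arc(S₃S₄)}] (τ − z)⁻¹ · log(1 + |r(τ)|²) dτ ), where r is a continuous function on the unit circle satisfying r(−τ) = −r(τ) and the arcs are symmetric with respect to the map τ ↦ −τ (i.e., S₃ = −S₁, S₄ = −S₂). Then δ(−z) = δ(z) for all z off the unit circle, and δ'(0) = 0. -/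
open Complex Real intervalIntegral

theorem Function.Even.deriv_zero {𝕜 F : Type*} [NontriviallyNormedField 𝕜] [NormedAddCommGroup F]
    [NormedSpace 𝕜 F] [IsAddTorsionFree F] {f : 𝕜 → F} (hf : Function.Even f) :
    deriv f 0 = 0 := by
  have h := deriv_comp_neg (f := f) (x := 0)
  rw [show (fun x => f (-x)) = f from funext hf, neg_zero] at h
  exact self_eq_neg.mp h

theorem Complex.exp_I_mul_add_pi (θ : ℝ) : exp (I * ↑(θ + π)) = -exp (I * θ) := by
  rw [← exp_add_pi_mul_I]
  push_cast
  ring_nf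

/-- `∫ (τ - z)⁻¹ w(τ) dτ` over the arc `τ = e^{iθ}`, `θ ∈ [a, b]`, so `dτ = i e^{iθ} dθ`. -/
noncomputable def arcCauchyIntegral (w : ℂ → ℂ) (a b : ℝ) (z : ℂ) : ℂ :=
  ∫ θ in a..b, (I * exp (I * θ)) * ((exp (I * θ) - z)⁻¹ * w (exp (I * θ)))

theorem arcCauchyIntegral_add_pi {w : ℂ → ℂ} (hw : Function.Even w) (a b : ℝ) (z : ℂ) :
    arcCauchyIntegral w (a + π) (b + π) z = arcCauchyIntegral w a b (-z) := by
  rw [arcCauchyIntegral, ← integral_comp_add_right _ π]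
  refine integral_congr fun θ _ => ?_
  rw [exp_I_mul_add_pi, hw, show -exp (I * θ) - z = -(exp (I * θ) - -z) by ring, inv_neg]
  ring

theorem even_ofReal_log_one_add_norm_sq {r : ℂ → ℂ} (hodd : ∀ τ, r (-τ) = -r τ) :
    Function.Even fun τ => ((Real.log (1 + ‖r τ‖ ^ 2) : ℝ) : ℂ) := by
  intro τ
  simp only [hodd, norm_neg]

theorem stmt16_general (r : ℂ → ℂ) (hodd : ∀ τ : ℂ, r (-τ) = -r τ)
    (θ₁ θ₂ : ℝ) (F : ℂ → ℂ)
    (hF : ∀ z : ℂ, F z = Complex.exp ((-1 / (2 * Real.pi * Complex.I)) *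
      ((∫ θ in θ₁..θ₂, (Complex.I * Complex.exp (Complex.I * θ)) *
          ((Complex.exp (Complex.I * θ) - z)⁻¹ *
            ((Real.log (1 + ‖r (Complex.exp (Complex.I * θ))‖ ^ 2) : ℝ) : ℂ))) +
       (∫ θ in (θ₁ + Real.pi)..(θ₂ + Real.pi), (Complex.I * Complex.exp (Complex.I * θ)) *
          ((Complex.exp (Complex.I * θ) - z)⁻¹ *
            ((Real.log (1 + ‖r (Complex.exp (Complex.I * θ))‖ ^ 2) : ℝ) : ℂ)))))) :
    (∀ z : ℂ, ‖z‖ ≠ 1 → F (-z) = F z) ∧ deriv F 0 = 0 := by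
  set w : ℂ → ℂ := fun τ => ((Real.log (1 + ‖r τ‖ ^ 2) : ℝ) : ℂ)
  have hw : Function.Even w := even_ofReal_log_one_add_norm_sq hodd
  have hF' : ∀ z, F z = exp ((-1 / (2 * π * I)) *
      (arcCauchyIntegral w θ₁ θ₂ z + arcCauchyIntegral w (θ₁ + π) (θ₂ + π) z)) := hF
  have heven : Function.Even F := fun z => by
    rw [hF', hF', arcCauchyIntegral_add_pi hw, arcCauchyIntegral_add_pi hw, neg_neg, add_comm]
  exact ⟨fun z _ => heven z, heven.deriv_zero⟩

theorem stmt16 (r : ℂ → ℂ) (hr : Continuous r) (hodd : ∀ τ : ℂ, r (-τ) = -r τ)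
    (θ₁ θ₂ : ℝ) (F : ℂ → ℂ)
    (hF : ∀ z : ℂ, F z = Complex.exp ((-1 / (2 * Real.pi * Complex.I)) *
      ((∫ θ in θ₁..θ₂, (Complex.I * Complex.exp (Complex.I * θ)) *
          ((Complex.exp (Complex.I * θ) - z)⁻¹ *
            ((Real.log (1 + ‖r (Complex.exp (Complex.I * θ))‖ ^ 2) : ℝ) : ℂ))) +
       (∫ θ in (θ₁ + Real.pi)..(θ₂ + Real.pi), (Complex.I * Complex.exp (Complex.I * θ)) *
          ((Complex.exp (Complex.I * θ) - z)⁻¹ *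
            ((Real.log (1 + ‖r (Complex.exp (Complex.I * θ))‖ ^ 2) : ℝ) : ℂ)))))) :
    (∀ z : ℂ, ‖z‖ ≠ 1 → F (-z) = F z) ∧ deriv F 0 = 0 :=
  stmt16_general r hodd θ₁ θ₂ F hF
end

section
/- With δ defined as in the δ-RHP, we have δ(z̄⁻¹) = δ(0)·conj(δ(z))⁻¹ for every z off the unit circle with z ≠ 0, where δ(0) > 0. -/
/-!
On the unit circle `conj τ = τ⁻¹`, which turns the Cauchy kernel into the reflection identity
`τ (τ - z̄⁻¹)⁻¹ + conj (τ (τ - z)⁻¹) = 1`. Multiplied by the purely imaginary weight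
`i log (1 + |r|²) dθ` (recall `dτ = iτ dθ`) and integrated, it says that the Cauchy integral at
`z̄⁻¹` is its value at `0` plus the conjugate of its value at `z`. The prefactor `-1 / (2πi)` is
purely imaginary as well, so the exponent of `δ` at `z̄⁻¹` is its value at `0` minus the conjugate
of its value at `z`, and the exponent at `0` is real.
-/

open Complex ComplexConjugate intervalIntegral
open MeasureTheory (volume)
open scoped Real

/-- `(τ - z)⁻¹ L dτ` on the unit circle in the parametrization `τ = e^{iθ}`, `dτ = i e^{iθ} dθ`. -/
noncomputable def cauchyArcIntegrand (L : ℝ → ℝ) (z : ℂ) (θ : ℝ) : ℂ :=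
  (I * exp (I * θ)) * ((exp (I * θ) - z)⁻¹ * (L θ : ℂ))

noncomputable def cauchyArcIntegral (L : ℝ → ℝ) (a b : ℝ) (z : ℂ) : ℂ :=
  ∫ θ in a..b, cauchyArcIntegrand L z θ

lemma cauchy_kernel_reflection {τ w : ℂ} (hτ : τ ≠ 0) (hw : w ≠ 0) (hτw : τ * w ≠ 1) :
    τ * (τ - w⁻¹)⁻¹ + τ⁻¹ * (τ⁻¹ - w)⁻¹ = 1 := by
  have h : τ * w - 1 ≠ 0 := sub_ne_zero.mpr hτw
  rw [show τ - w⁻¹ = (τ * w - 1) / w by field_simp,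
    show τ⁻¹ - w = (1 - τ * w) / τ by field_simp]
  field_simp
  ring

lemma conj_exp_I_mul_ofReal (θ : ℝ) : conj (exp (I * θ)) = (exp (I * θ))⁻¹ :=
  (inv_eq_conj (norm_exp_I_mul_ofReal θ)).symm

section Integrand

variable (L : ℝ → ℝ)

lemma cauchyArcIntegrand_zero (θ : ℝ) : cauchyArcIntegrand L 0 θ = I * L θ := by
  simp only [cauchyArcIntegrand, sub_zero]
  field_simp

lemma cauchyArcIntegrand_inv_conj {z : ℂ} (hz₀ : z ≠ 0) (hz : ‖z‖ ≠ 1) (θ : ℝ) :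
    cauchyArcIntegrand L (conj z)⁻¹ θ
      = cauchyArcIntegrand L 0 θ + conj (cauchyArcIntegrand L z θ) := by
  have hτw : exp (I * θ) * conj z ≠ 1 := fun h => hz <| by
    simpa [norm_exp_I_mul_ofReal] using congrArg norm h
  have key := cauchy_kernel_reflection (exp_ne_zero (I * θ)) ((map_ne_zero _).mpr hz₀) hτw
  rw [cauchyArcIntegrand_zero]
  simp only [cauchyArcIntegrand, map_mul, map_sub, map_inv₀, conj_I, conj_exp_I_mul_ofReal,
    conj_ofReal]
  linear_combination (I * (L θ : ℂ)) * key

lemma intervalIntegrable_cauchyArcIntegrand {a b : ℝ} (hL : IntervalIntegrable L volume a b)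
    {z : ℂ} (hz : ‖z‖ ≠ 1) : IntervalIntegrable (cauchyArcIntegrand L z) volume a b := by
  have hkernel : Continuous fun θ : ℝ => I * exp (I * θ) * (exp (I * θ) - z)⁻¹ := by
    refine Continuous.mul (by fun_prop) (Continuous.inv₀ (by fun_prop) fun θ h => hz ?_)
    rw [← sub_eq_zero.mp h, norm_exp_I_mul_ofReal]
  convert (show IntervalIntegrable (fun θ => (L θ : ℂ)) volume a b from
    ⟨hL.1.ofReal, hL.2.ofReal⟩).continuousOn_mul hkernel.continuousOn using 2 with θ
  simp only [cauchyArcIntegrand, mul_assoc]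

end Integrand

section Integral

variable {L : ℝ → ℝ} {a b : ℝ}

lemma cauchyArcIntegral_zero :
    cauchyArcIntegral L a b 0 = I * ((∫ θ in a..b, L θ : ℝ) : ℂ) := by
  simp only [cauchyArcIntegral, cauchyArcIntegrand_zero, integral_const_mul, integral_ofReal]

lemma cauchyArcIntegral_inv_conj (hL : IntervalIntegrable L volume a b) {z : ℂ} (hz₀ : z ≠ 0)
    (hz : ‖z‖ ≠ 1) :
    cauchyArcIntegral L a b (conj z)⁻¹
      = cauchyArcIntegral L a b 0 + conj (cauchyArcIntegral L a b z) := by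
  simp only [cauchyArcIntegral, cauchyArcIntegrand_inv_conj L hz₀ hz]
  have hint := intervalIntegrable_cauchyArcIntegrand L hL hz
  have hint_conj : IntervalIntegrable (fun θ => conj (cauchyArcIntegrand L z θ)) volume a b :=
    ⟨conjCLE.toContinuousLinearMap.integrable_comp hint.1,
      conjCLE.toContinuousLinearMap.integrable_comp hint.2⟩
  rw [integral_add (intervalIntegrable_cauchyArcIntegrand L hL (by simp)) hint_conj,
    intervalIntegral_conj]

end Integral

lemma exp_mul_add_conj {c : ℂ} (hc : conj c = -c) (u v : ℂ) :
    exp (c * (u + conj v)) = exp (c * u) * (conj (exp (c * v)))⁻¹ := by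
  rw [← exp_conj, ← exp_neg, ← exp_add, map_mul, hc]
  ring_nf

lemma conj_neg_one_div_two_pi_I : conj (-1 / (2 * π * I)) = -(-1 / (2 * π * I)) := by
  rw [map_div₀, map_neg, map_one, map_mul, map_mul, conj_I, conj_ofReal, map_ofNat, mul_neg,
    div_neg]

lemma exp_neg_one_div_two_pi_I_mul_I_ofReal (x : ℝ) :
    exp (-1 / (2 * π * I) * (I * x)) = (Real.exp (-x / (2 * π)) : ℂ) := by
  rw [ofReal_exp]
  congr 1
  push_cast
  field_simp

theorem stmt17_general (r : ℂ → ℂ) (hr : Continuous r)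
    (θ₁ θ₂ : ℝ) (F : ℂ → ℂ)
    (hF : ∀ z : ℂ, F z = Complex.exp ((-1 / (2 * Real.pi * Complex.I)) *
      ((∫ θ in θ₁..θ₂, (Complex.I * Complex.exp (Complex.I * θ)) *
          ((Complex.exp (Complex.I * θ) - z)⁻¹ *
            ((Real.log (1 + (‖r (Complex.exp (Complex.I * θ))‖) ^ 2) : ℝ) : ℂ))) +
       (∫ θ in (θ₁ + Real.pi)..(θ₂ + Real.pi), (Complex.I * Complex.exp (Complex.I * θ)) *
          ((Complex.exp (Complex.I * θ) - z)⁻¹ *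
            ((Real.log (1 + (‖r (Complex.exp (Complex.I * θ))‖) ^ 2) : ℝ) : ℂ)))))) :
    (F 0).im = 0 ∧ 0 < (F 0).re ∧
    ∀ z : ℂ, z ≠ 0 → ‖z‖ ≠ 1 →
      F ((starRingEnd ℂ z)⁻¹) = F 0 * (starRingEnd ℂ (F z))⁻¹ := by
  set L : ℝ → ℝ := fun θ => Real.log (1 + ‖r (exp (I * θ))‖ ^ 2)
  have hL : Continuous L := (by fun_prop : Continuous fun θ : ℝ => 1 + ‖r (exp (I * θ))‖ ^ 2).log
    fun _ => by positivity
  set Φ : ℂ → ℂ := fun z => cauchyArcIntegral L θ₁ θ₂ z + cauchyArcIntegral L (θ₁ + π) (θ₂ + π) z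
  have hFΦ : ∀ z, F z = exp (-1 / (2 * π * I) * Φ z) := hF
  have hF₀ : F 0 = (Real.exp
      (-((∫ θ in θ₁..θ₂, L θ) + ∫ θ in (θ₁ + π)..(θ₂ + π), L θ) / (2 * π)) : ℂ) := by
    rw [hFΦ, ← exp_neg_one_div_two_pi_I_mul_I_ofReal]
    simp only [Φ, cauchyArcIntegral_zero]
    push_cast
    ring_nf
  refine ⟨by rw [hF₀, ofReal_im], by rw [hF₀, ofReal_re]; exact Real.exp_pos _, fun z hz₀ hz => ?_⟩
  have hΦ : Φ (conj z)⁻¹ = Φ 0 + conj (Φ z) := by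
    simp only [Φ, cauchyArcIntegral_inv_conj (hL.intervalIntegrable _ _) hz₀ hz, map_add]
    ring
  rw [hFΦ, hFΦ, hFΦ, hΦ, exp_mul_add_conj conj_neg_one_div_two_pi_I]

theorem stmt17 (r : ℂ → ℂ) (hr : Continuous r) (hodd : ∀ τ : ℂ, r (-τ) = -r τ)
    (θ₁ θ₂ : ℝ) (F : ℂ → ℂ)
    (hF : ∀ z : ℂ, F z = Complex.exp ((-1 / (2 * Real.pi * Complex.I)) *
      ((∫ θ in θ₁..θ₂, (Complex.I * Complex.exp (Complex.I * θ)) *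
          ((Complex.exp (Complex.I * θ) - z)⁻¹ *
            ((Real.log (1 + (‖r (Complex.exp (Complex.I * θ))‖) ^ 2) : ℝ) : ℂ))) +
       (∫ θ in (θ₁ + Real.pi)..(θ₂ + Real.pi), (Complex.I * Complex.exp (Complex.I * θ)) *
          ((Complex.exp (Complex.I * θ) - z)⁻¹ *
            ((Real.log (1 + (‖r (Complex.exp (Complex.I * θ))‖) ^ 2) : ℝ) : ℂ)))))) :
    (F 0).im = 0 ∧ 0 < (F 0).re ∧
    ∀ z : ℂ, z ≠ 0 → ‖z‖ ≠ 1 →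
      F ((starRingEnd ℂ z)⁻¹) = F 0 * (starRingEnd ℂ (F z))⁻¹ :=
  stmt17_general r hr θ₁ θ₂ F hF
end
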